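/- Constant utility slope under one-period finite dependence (Corollary 2): Let Q_A be an X×X row-stochastic real matrix, let Q_a be an X×X real matrix satisfying Q_a Q_A = Q_A² (one-period finite dependence), let p_A, p_a ∈ ℝ^X have all entries in (0,1), and define π_a(t) := (I_X − tQ_a)(I_X − tQ_A)⁻¹(−log p_A) + log p_a for t ∈ [0,1). Then for every β ∈ [0,1), π_a is differentiable at β with derivative ∂π_a/∂β = (−Q_a + Q_A)(−log p_A), which does not depend on β. Consequently, for each state x ∈ {1,…,X}, with ξ_x denoting the x-th entry of (−Q_a + Q_A)(−log p_A), the function β ↦ π_a(β)(x) on [0,1) is strictly increasing if ξ_x > 0, strictly decreasing if ξ_x < 0, and constant if ξ_x = 0. -/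

import Mathlib

/-!
Under one-period finite dependence `Q_a Q_A = Q_A²`, the matrix `Q_A - Q_a` annihilates `Q_A`, so
`I - β Q_a = (I + β (Q_A - Q_a)) (I - β Q_A)`. Hence `(I - β Q_a)(I - β Q_A)⁻¹ = I + β (Q_A - Q_a)`
and `π_a` is affine in `β` with slope `ξ = (Q_A - Q_a)(-log p_A)`. The inverse exists because a
row-stochastic matrix has `ℓ∞` operator norm at most `1`.
-/

open Matrix

namespace Matrix

variable {n : Type*} [Fintype n] [DecidableEq n]

section LinftyOpNorm

attribute [local instance] Matrix.linftyOpNormedRing Matrix.linftyOpNormedAlgebra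

theorem linfty_opNorm_le_one_of_mem_rowStochastic {Q : Matrix n n ℝ}
    (hQ : Q ∈ rowStochastic ℝ n) : ‖Q‖ ≤ 1 := by
  have hrow : ∀ i, ∑ j, ‖Q i j‖₊ = 1 := fun i => by
    ext
    push_cast
    simp only [Real.norm_of_nonneg (nonneg_of_mem_rowStochastic hQ),
      sum_row_of_mem_rowStochastic hQ]
  rw [linfty_opNorm_def]
  exact_mod_cast Finset.sup_le fun i _ => (hrow i).le

theorem isUnit_det_one_sub_smul_of_mem_rowStochastic {Q : Matrix n n ℝ}
    (hQ : Q ∈ rowStochastic ℝ n) {t : ℝ} (ht : |t| < 1) : IsUnit (1 - t • Q).det := by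
  refine (isUnit_iff_isUnit_det _).mp (isUnit_one_sub_of_norm_lt_one ?_)
  calc ‖t • Q‖ = |t| * ‖Q‖ := by rw [norm_smul, Real.norm_eq_abs]
    _ ≤ |t| * 1 := by gcongr; exact linfty_opNorm_le_one_of_mem_rowStochastic hQ
    _ < 1 := by rwa [mul_one]

end LinftyOpNorm

theorem one_sub_smul_mul_inv_one_sub_smul {R : Type*} [CommRing R] {A B : Matrix n n R}
    (hBA : B * A = A ^ 2) {t : R} (ht : IsUnit (1 - t • A).det) :
    (1 - t • B) * (1 - t • A)⁻¹ = 1 + t • (A - B) := by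
  have hann : (A - B) * A = 0 := by rw [Matrix.sub_mul, hBA, sq, sub_self]
  have hcancel : (A - B) * (1 - t • A) = A - B := by
    rw [Matrix.mul_sub, Matrix.mul_one, Matrix.mul_smul, hann, smul_zero, sub_zero]
  have hfactor : 1 - t • B = (1 + t • (A - B)) * (1 - t • A) := by
    rw [Matrix.add_mul, Matrix.smul_mul, hcancel, Matrix.one_mul, smul_sub]
    abel
  rw [hfactor, mul_nonsing_inv_cancel_right _ _ ht]

end Matrix

theorem stmt_9_general (X : ℕ) (QA Qa : Matrix (Fin X) (Fin X) ℝ)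
    (hQAnonneg : ∀ i j, 0 ≤ QA i j)
    (hQArow : ∀ i, ∑ j, QA i j = 1)
    (hfd : Qa * QA = QA ^ 2)
    (pA pa : Fin X → ℝ) :
    let πa : ℝ → Fin X → ℝ := fun t =>
      (((1 : Matrix (Fin X) (Fin X) ℝ) - t • Qa) * (1 - t • QA)⁻¹).mulVec
          (fun x => -Real.log (pA x))
        + fun x => Real.log (pa x)
    let ξ : Fin X → ℝ := (-Qa + QA).mulVec (fun x => -Real.log (pA x))
    (∀ β ∈ Set.Ico (0 : ℝ) 1, HasDerivAt πa ξ β) ∧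
      ∀ x : Fin X,
        (0 < ξ x → StrictMonoOn (fun β => πa β x) (Set.Ico (0 : ℝ) 1)) ∧
        (ξ x < 0 → StrictAntiOn (fun β => πa β x) (Set.Ico (0 : ℝ) 1)) ∧
        (ξ x = 0 → ∀ β₁ ∈ Set.Ico (0 : ℝ) 1, ∀ β₂ ∈ Set.Ico (0 : ℝ) 1,
          πa β₁ x = πa β₂ x) := by
  intro πa ξ
  set v : Fin X → ℝ := fun x => -Real.log (pA x)
  set w : Fin X → ℝ := v + fun x => Real.log (pa x)
  have hQA : QA ∈ rowStochastic ℝ (Fin X) := mem_rowStochastic_iff_sum.2 ⟨hQAnonneg, hQArow⟩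
  have haffine : ∀ t ∈ Set.Ioo (-1 : ℝ) 1, πa t = w + t • ξ := fun t ht => by
    have hunit := isUnit_det_one_sub_smul_of_mem_rowStochastic hQA (abs_lt.2 ht)
    change ((1 - t • Qa) * (1 - t • QA)⁻¹) *ᵥ v + _ = w + t • ((-Qa + QA) *ᵥ v)
    rw [one_sub_smul_mul_inv_one_sub_smul hfd hunit, add_mulVec, one_mulVec, smul_mulVec,
      neg_add_eq_sub, add_right_comm]
  have hIco : Set.Ico (0 : ℝ) 1 ⊆ Set.Ioo (-1) 1 := fun t ht => ⟨by linarith [ht.1], ht.2⟩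
  have hcoord : ∀ x, Set.EqOn (fun β => w x + β * ξ x) (fun β => πa β x) (Set.Ico 0 1) :=
    fun x β hβ => by simp [haffine β (hIco hβ)]
  refine ⟨fun β hβ => ?_, fun x => ⟨fun hpos => ?_, fun hneg => ?_, fun hzero => ?_⟩⟩
  · have hline : HasDerivAt (fun t : ℝ => w + t • ξ) ξ β := by
      simpa using ((hasDerivAt_id β).smul_const ξ).const_add w
    exact hline.congr_of_eventuallyEq <| Filter.eventuallyEq_of_mem
      (Ioo_mem_nhds (by linarith [hβ.1]) hβ.2) haffine
  · exact (((strictMono_mul_right_of_pos hpos).const_add (w x)).strictMonoOn _).congr (hcoord x)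
  · exact (((strictAnti_mul_right hneg).const_add (w x)).strictAntiOn _).congr (hcoord x)
  · intro β₁ h₁ β₂ h₂
    calc πa β₁ x = w x + β₁ * ξ x := (hcoord x h₁).symm
      _ = w x + β₂ * ξ x := by rw [hzero, mul_zero, mul_zero]
      _ = πa β₂ x := hcoord x h₂

/-- Constant utility slope under one-period finite dependence (Corollary 2). -/
theorem stmt_9 (X : ℕ) (QA Qa : Matrix (Fin X) (Fin X) ℝ)
    (hQAnonneg : ∀ i j, 0 ≤ QA i j)
    (hQArow : ∀ i, ∑ j, QA i j = 1)
    (hfd : Qa * QA = QA ^ 2)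
    (pA pa : Fin X → ℝ)
    (hpA : ∀ x, pA x ∈ Set.Ioo (0 : ℝ) 1)
    (hpa : ∀ x, pa x ∈ Set.Ioo (0 : ℝ) 1) :
    let πa : ℝ → Fin X → ℝ := fun t =>
      (((1 : Matrix (Fin X) (Fin X) ℝ) - t • Qa) * (1 - t • QA)⁻¹).mulVec
          (fun x => -Real.log (pA x))
        + fun x => Real.log (pa x)
    let ξ : Fin X → ℝ := (-Qa + QA).mulVec (fun x => -Real.log (pA x))
    (∀ β ∈ Set.Ico (0 : ℝ) 1, HasDerivAt πa ξ β) ∧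
      ∀ x : Fin X,
        (0 < ξ x → StrictMonoOn (fun β => πa β x) (Set.Ico (0 : ℝ) 1)) ∧
        (ξ x < 0 → StrictAntiOn (fun β => πa β x) (Set.Ico (0 : ℝ) 1)) ∧
        (ξ x = 0 → ∀ β₁ ∈ Set.Ico (0 : ℝ) 1, ∀ β₂ ∈ Set.Ico (0 : ℝ) 1,
          πa β₁ x = πa β₂ x) :=
  stmt_9_general X QA Qa hQAnonneg hQArow hfd pA pa
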